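/- arXiv:1101.0333 — 8 statements merged into one kernel-verified Lean document; each statement's English description precedes it below -/
import Mathlib

section
/- Let E be a finite partially ordered set and P a stochastic matrix on E. Then P is ↑-weakly monotone if and only if P preserves the class F, i.e., for every f ∈ F the function e ↦ Σ_{e'∈E} P(e,e') f(e') also belongs to F. -/
open Finset Matrix

/-- `P` is a stochastic matrix: nonnegative entries, rows summing to 1. -/
def IsStochastic {E : Type*} [Fintype E] (P : Matrix E E ℝ) : Prop :=
  (∀ e e', 0 ≤ P e e') ∧ ∀ e, ∑ e', P e e' = 1

/-- `π` is a probability vector. -/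
def IsProbVec {E : Type*} [Fintype E] (π : E → ℝ) : Prop :=
  (∀ e, 0 ≤ π e) ∧ ∑ e, π e = 1

/-- `π₁ ≼↑ π₂` : `π₁({e}↑) ≤ π₂({e}↑)` for every `e`. -/
def UpLE {E : Type*} [Fintype E] [PartialOrder E]
    [DecidableRel ((· ≤ ·) : E → E → Prop)] (π₁ π₂ : E → ℝ) : Prop :=
  ∀ e, ∑ e' ∈ univ.filter (fun e' => e ≤ e'), π₁ e'
      ≤ ∑ e' ∈ univ.filter (fun e' => e ≤ e'), π₂ e'

/-- The class `F` of functions `f` with `∫ f dπ₁ ≤ ∫ f dπ₂` whenever `π₁ ≼↑ π₂`. -/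
def InClassF {E : Type*} [Fintype E] [PartialOrder E]
    [DecidableRel ((· ≤ ·) : E → E → Prop)] (f : E → ℝ) : Prop :=
  ∀ π₁ π₂ : E → ℝ, IsProbVec π₁ → IsProbVec π₂ → UpLE π₁ π₂ →
    ∑ e, π₁ e * f e ≤ ∑ e, π₂ e * f e

/-!
Since `∑ π(e) (Pf)(e) = ∑ (πP)(e') f(e')`, if `P` is monotone then `Pf` inherits the defining
inequality of `F` from `f`. Conversely, the indicator of the up-set `{e}↑` lies in
`F` (pairing it with `π` gives `π({e}↑)`), and `P` applied to it pairs with `π` to give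
`(πP)({e}↑)`.
-/

lemma IsProbVec.vecMul {E : Type*} [Fintype E] {P : Matrix E E ℝ} (hP : IsStochastic P)
    {π : E → ℝ} (hπ : IsProbVec π) : IsProbVec (fun e' => ∑ e, π e * P e e') := by
  refine ⟨fun e' => sum_nonneg fun e _ => mul_nonneg (hπ.1 e) (hP.1 e e'), ?_⟩
  rw [sum_comm]
  simp_rw [← mul_sum, hP.2, mul_one, hπ.2]

lemma sum_mul_sum_eq_sum_sum_mul {E : Type*} [Fintype E] (P : Matrix E E ℝ) (π f : E → ℝ) :
    ∑ e, π e * ∑ e', P e e' * f e' = ∑ e', (∑ e, π e * P e e') * f e' :=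
  dotProduct_mulVec π P f

section UpSet

variable {E : Type*} [Fintype E] [PartialOrder E] [DecidableRel ((· ≤ ·) : E → E → Prop)]

lemma sum_mul_indicator_Ici (e : E) (π : E → ℝ) :
    ∑ e', π e' * (if e ≤ e' then 1 else 0) = ∑ e' ∈ univ.filter (fun e' => e ≤ e'), π e' := by
  simp [sum_filter]

lemma inClassF_indicator_Ici (e : E) :
    InClassF (fun e' : E => if e ≤ e' then (1 : ℝ) else 0) := by
  intro π₁ π₂ _ _ hle
  simpa only [sum_mul_indicator_Ici] using hle e

end UpSet

/-- `P` is ↑-weakly monotone iff `P` preserves the class `F`. -/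
theorem stmt0 {E : Type*} [Fintype E] [PartialOrder E]
    [DecidableRel ((· ≤ ·) : E → E → Prop)]
    (P : Matrix E E ℝ) (hP : IsStochastic P) :
    (∀ π₁ π₂ : E → ℝ, IsProbVec π₁ → IsProbVec π₂ → UpLE π₁ π₂ →
        UpLE (fun e' => ∑ e, π₁ e * P e e') (fun e' => ∑ e, π₂ e * P e e'))
    ↔ (∀ f : E → ℝ, InClassF f → InClassF (fun e => ∑ e', P e e' * f e')) := by
  constructor
  · intro hmono f hf π₁ π₂ h₁ h₂ hle
    simp only [sum_mul_sum_eq_sum_sum_mul]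
    exact hf _ _ (h₁.vecMul hP) (h₂.vecMul hP) (hmono π₁ π₂ h₁ h₂ hle)
  · intro hpres π₁ π₂ h₁ h₂ hle e
    have h := hpres _ (inClassF_indicator_Ici e) π₁ π₂ h₁ h₂ hle
    rwa [sum_mul_sum_eq_sum_sum_mul, sum_mul_sum_eq_sum_sum_mul, sum_mul_indicator_Ici,
      sum_mul_indicator_Ici] at h
end

section
/- Let E be a finite partially ordered set and P a stochastic matrix on E. If P is ↑-Möbius monotone then P is ↑-weakly monotone. -/
open Finset Matrix

/-- The zeta matrix of a finite poset: `C(e,e') = 1` if `e ≤ e'`, else `0`.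
Its matrix inverse is the Möbius function of the poset. -/
noncomputable def zeta (E : Type*) [Fintype E] [PartialOrder E]
    [DecidableRel ((· ≤ ·) : E → E → Prop)] : Matrix E E ℝ :=
  Matrix.of fun e e' => if e ≤ e' then 1 else 0

/-! With `C` the zeta matrix, `(π ᵥ* Cᵀ) e = π({e}↑)`, so `≼↑` is the pointwise order on
`π ᵥ* Cᵀ`. Writing `M = (Cᵀ)⁻¹ P Cᵀ`, we have `(π ᵥ* P) ᵥ* Cᵀ = (π ᵥ* Cᵀ) ᵥ* M`, and
multiplication by the nonnegative matrix `M` is monotone. `Cᵀ` is invertible because `C` is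
upper triangular along a linear extension of the order, with ones on the diagonal. -/

theorem Matrix.det_eq_prod_diag_of_ne_zero_imp_le {m R : Type*} [Fintype m] [DecidableEq m]
    [PartialOrder m] [CommRing R] (M : Matrix m m R) (hM : ∀ i j, M i j ≠ 0 → i ≤ j) :
    M.det = ∏ i, M i i := by
  let _ : Fintype (LinearExtension m) := ‹Fintype m›
  let _ : DecidableEq (LinearExtension m) := ‹DecidableEq m›
  let e : m ≃ LinearExtension m := Equiv.refl m
  rw [← det_reindex_self e M, det_of_isUpperTriangular]
  · rfl
  · intro i j hji
    by_contra h
    exact not_lt_of_ge (toLinearExtension.monotone (hM _ _ h)) hji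

section Zeta

variable {E : Type*} [Fintype E] [PartialOrder E] [DecidableRel ((· ≤ ·) : E → E → Prop)]

theorem det_zeta [DecidableEq E] : (zeta E).det = 1 := by
  rw [det_eq_prod_diag_of_ne_zero_imp_le]
  · simp [zeta]
  · intro i j h
    by_contra hij
    simp [zeta, hij] at h

theorem vecMul_zeta_transpose_apply (v : E → ℝ) (e : E) :
    (v ᵥ* (zeta E)ᵀ) e = ∑ e' ∈ univ.filter (e ≤ ·), v e' := by
  simp [vecMul, dotProduct, zeta, sum_filter]

theorem upLE_iff_vecMul_zeta_transpose_le (π₁ π₂ : E → ℝ) :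
    UpLE π₁ π₂ ↔ π₁ ᵥ* (zeta E)ᵀ ≤ π₂ ᵥ* (zeta E)ᵀ := by
  simp only [UpLE, Pi.le_def, vecMul_zeta_transpose_apply]

end Zeta

theorem Matrix.vecMul_le_vecMul_of_nonneg {m n R : Type*} [Fintype m] [Semiring R]
    [PartialOrder R] [IsOrderedRing R] {v w : m → R} (hvw : v ≤ w) {M : Matrix m n R}
    (hM : ∀ i j, 0 ≤ M i j) : v ᵥ* M ≤ w ᵥ* M :=
  fun j => sum_le_sum fun i _ => mul_le_mul_of_nonneg_right (hvw i) (hM i j)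

theorem Matrix.vecMul_vecMul_mono_of_nonneg_conj {n R : Type*} [Fintype n] [DecidableEq n]
    [CommRing R] [PartialOrder R] [IsOrderedRing R] {C P : Matrix n n R} (hC : IsUnit C.det)
    (hCPC : ∀ i j, 0 ≤ (C⁻¹ * P * C) i j) {v w : n → R} (hvw : v ᵥ* C ≤ w ᵥ* C) :
    v ᵥ* P ᵥ* C ≤ w ᵥ* P ᵥ* C := by
  have hPC : P * C = C * (C⁻¹ * P * C) := by
    rw [← Matrix.mul_assoc, ← Matrix.mul_assoc, mul_nonsing_inv _ hC, Matrix.one_mul]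
  have hconj (u : n → R) : u ᵥ* P ᵥ* C = u ᵥ* C ᵥ* (C⁻¹ * P * C) := by
    rw [vecMul_vecMul, hPC, ← vecMul_vecMul]
  rw [hconj, hconj]
  exact vecMul_le_vecMul_of_nonneg hvw hCPC

theorem stmt1_general {E : Type*} [Fintype E] [DecidableEq E] [PartialOrder E]
    [DecidableRel ((· ≤ ·) : E → E → Prop)]
    (P : Matrix E E ℝ)
    (hMob : ∀ e e', 0 ≤ ((((zeta E)ᵀ)⁻¹ * P * (zeta E)ᵀ)) e e') :
    ∀ π₁ π₂ : E → ℝ, IsProbVec π₁ → IsProbVec π₂ → UpLE π₁ π₂ →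
      UpLE (π₁ ᵥ* P) (π₂ ᵥ* P) := by
  intro π₁ π₂ _ _ hπ
  have hC : IsUnit (zeta E)ᵀ.det := by simp [det_transpose, det_zeta]
  rw [upLE_iff_vecMul_zeta_transpose_le] at hπ ⊢
  exact vecMul_vecMul_mono_of_nonneg_conj hC hMob hπ

/-- if `P` is ↑-Möbius monotone (every entry of `(Cᵀ)⁻¹ P Cᵀ` is
nonnegative) then `P` is ↑-weakly monotone. -/
theorem stmt1 {E : Type*} [Fintype E] [DecidableEq E] [PartialOrder E]
    [DecidableRel ((· ≤ ·) : E → E → Prop)]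
    (P : Matrix E E ℝ) (hP : IsStochastic P)
    (hMob : ∀ e e', 0 ≤ ((((zeta E)ᵀ)⁻¹ * P * (zeta E)ᵀ)) e e') :
    ∀ π₁ π₂ : E → ℝ, IsProbVec π₁ → IsProbVec π₂ → UpLE π₁ π₂ →
      UpLE (π₁ ᵥ* P) (π₂ ᵥ* P) :=
  stmt1_general P hMob
end

section
/- Let E be a finite partially ordered set and P a stochastic matrix on E. If P is ↓-Möbius monotone then P is ↓-weakly monotone. -/
open Finset Matrix

/-- `π₁ ≼↓ π₂` : `π₁({e}↓) ≤ π₂({e}↓)` for every `e`. -/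
def DownLE {E : Type*} [Fintype E] [PartialOrder E]
    [DecidableRel ((· ≤ ·) : E → E → Prop)] (π₁ π₂ : E → ℝ) : Prop :=
  ∀ e, ∑ e' ∈ univ.filter (fun e' => e' ≤ e), π₁ e'
      ≤ ∑ e' ∈ univ.filter (fun e' => e' ≤ e), π₂ e'


/-! Summing a vector over the down-sets `{e}↓` is right multiplication by the zeta matrix `C`,
so `π ↦ π C` turns `≼↓` into the pointwise order. Since `(π P) C = (π C) (C⁻¹ P C)`, the map
`π ↦ π P` becomes right multiplication by the nonnegative matrix `C⁻¹ P C`, which is monotone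
for the pointwise order. -/

namespace IncidenceAlgebra

variable {𝕜 α : Type*} [Preorder α]

def toMatrix [Zero 𝕜] (f : IncidenceAlgebra 𝕜 α) : Matrix α α 𝕜 :=
  Matrix.of fun a b => f a b

lemma toMatrix_mul [Fintype α] [LocallyFiniteOrder α] [NonUnitalNonAssocSemiring 𝕜]
    (f g : IncidenceAlgebra 𝕜 α) :
    (f * g).toMatrix = f.toMatrix * g.toMatrix := by
  ext a b
  rw [Matrix.mul_apply, toMatrix, of_apply, mul_apply]
  refine Finset.sum_subset (subset_univ _) fun x _ hx => ?_
  rcases not_and_or.mp (mem_Icc.not.mp hx) with hax | hxb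
  · simp [apply_eq_zero_of_not_le hax]
  · simp [apply_eq_zero_of_not_le hxb]

lemma toMatrix_one [DecidableEq α] [Zero 𝕜] [One 𝕜] :
    (1 : IncidenceAlgebra 𝕜 α).toMatrix = 1 := by
  ext a b
  rw [toMatrix, of_apply, one_apply, Matrix.one_apply]

end IncidenceAlgebra

section Zeta

variable {E : Type*} [Fintype E] [PartialOrder E] [DecidableRel ((· ≤ ·) : E → E → Prop)]

lemma isUnit_det_zeta [DecidableEq E] : IsUnit (zeta E).det := by
  classical
  let _ : LocallyFiniteOrder E := Fintype.toLocallyFiniteOrder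
  have hzeta : zeta E = (IncidenceAlgebra.zeta ℝ : IncidenceAlgebra ℝ E).toMatrix := rfl
  refine isUnit_det_of_left_inverse (B := (IncidenceAlgebra.mu ℝ).toMatrix) ?_
  rw [hzeta, ← IncidenceAlgebra.toMatrix_mul, IncidenceAlgebra.mu_mul_zeta,
    IncidenceAlgebra.toMatrix_one]

lemma vecMul_zeta_apply (π : E → ℝ) (e : E) :
    (π ᵥ* zeta E) e = ∑ e' ∈ univ.filter (· ≤ e), π e' := by
  simp [vecMul, dotProduct, zeta, Finset.sum_filter]

lemma downLE_iff_vecMul_zeta_le (π₁ π₂ : E → ℝ) :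
    DownLE π₁ π₂ ↔ π₁ ᵥ* zeta E ≤ π₂ ᵥ* zeta E := by
  simp only [DownLE, Pi.le_def, vecMul_zeta_apply]

end Zeta

namespace Matrix

variable {n R : Type*} [Fintype n]

lemma vecMul_vecMul_eq_vecMul_conj [DecidableEq n] [CommRing R] (v : n → R)
    (P A : Matrix n n R) (hA : IsUnit A.det) : v ᵥ* P ᵥ* A = v ᵥ* A ᵥ* (A⁻¹ * P * A) := by
  rw [vecMul_vecMul, vecMul_vecMul, ← Matrix.mul_assoc, ← Matrix.mul_assoc, mul_nonsing_inv _ hA,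
    Matrix.one_mul]

lemma vecMul_le_vecMul_of_nonneg_s2 [Semiring R] [PartialOrder R] [IsOrderedRing R]
    {u v : n → R} {M : Matrix n n R} (huv : u ≤ v) (hM : ∀ i j, 0 ≤ M i j) :
    u ᵥ* M ≤ v ᵥ* M := fun j =>
  Finset.sum_le_sum fun i _ => mul_le_mul_of_nonneg_right (huv i) (hM i j)

end Matrix

theorem stmt2_general {E : Type*} [Fintype E] [DecidableEq E] [PartialOrder E]
    [DecidableRel ((· ≤ ·) : E → E → Prop)]
    (P : Matrix E E ℝ)
    (hMob : ∀ e e', 0 ≤ ((zeta E)⁻¹ * P * zeta E) e e') :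
    ∀ π₁ π₂ : E → ℝ, IsProbVec π₁ → IsProbVec π₂ → DownLE π₁ π₂ →
      DownLE (π₁ ᵥ* P) (π₂ ᵥ* P) := by
  intro π₁ π₂ _ _ h12
  rw [downLE_iff_vecMul_zeta_le] at h12 ⊢
  rw [vecMul_vecMul_eq_vecMul_conj π₁ P _ isUnit_det_zeta,
    vecMul_vecMul_eq_vecMul_conj π₂ P _ isUnit_det_zeta]
  exact vecMul_le_vecMul_of_nonneg_s2 h12 hMob

/-- if `P` is ↓-Möbius monotone (every entry of `C⁻¹ P C` is
nonnegative) then `P` is ↓-weakly monotone. -/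
theorem stmt2 {E : Type*} [Fintype E] [DecidableEq E] [PartialOrder E]
    [DecidableRel ((· ≤ ·) : E → E → Prop)]
    (P : Matrix E E ℝ) (hP : IsStochastic P)
    (hMob : ∀ e e', 0 ≤ ((zeta E)⁻¹ * P * zeta E) e e') :
    ∀ π₁ π₂ : E → ℝ, IsProbVec π₁ → IsProbVec π₂ → DownLE π₁ π₂ →
      DownLE (π₁ ᵥ* P) (π₂ ᵥ* P) :=
  stmt2_general P hMob
end

section
/- (Linearly ordered case, ↓ version.) Let E = {1,…,M} with the usual linear order, and let P be an irreducible stochastic matrix on E with strictly positive stationary distribution π. Let ←P(j,i) = π(i)P(i,j)/π(j), H(j) = Σ_{k≤j} π(k), and g(i) = ν(i)/π(i) for a given initial probability vector ν. Assume (i) g is non-increasing and (ii) ←P is stochastically monotone (for j ≤ j', ←P(j',{1,…,i}) ≤ ←P(j,{1,…,i}) for all i, where ←P(j,A) = Σ_{k∈A} ←P(j,k)). Define Λ(j,i) = 1{i ≤ j}·π(i)/H(j), ν*(i) = H(i)(g(i) − g(i+1)), and P*(i,j) = (H(j)/H(i))(←P(j,{1,…,i}) − ←P(j+1,{1,…,i})),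 with the conventions g(M+1) = 0 and ←P(M+1,·) = 0. Then Λ is a stochastic matrix, ν* is a probability vector with ν = ν*Λ, and P* is a stochastic matrix with ΛP = P*Λ. -/
open Finset Matrix

/-! Row `j` of `Λ` is `π` conditioned on `{i ≤ j}`, so in `ν*Λ` and `P*Λ` the weight `H(j)` of
every term cancels against `Λ(j,i) = π(i)/H(j)` and the sums over `j ≥ i` telescope: to
`π(i) g(i) = ν(i)`, and to `π(i) ←P(i,{1,…,j}) / H(j) = (ΛP)(j,i)`. Nonnegativity of `ν*` and `P*`
is the monotonicity of `g` and of `←P`, and the rows of `P*` sum to 1 because `P*Λ = ΛP` and the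
rows of `Λ` and `P` do. -/

section RowSums

variable {ι κ R : Type*} [Fintype κ] [Semiring R]

lemma mulVec_one_eq_one_iff {A : Matrix ι κ R} : A *ᵥ 1 = 1 ↔ ∀ i, ∑ j, A i j = 1 := by
  simp [funext_iff, mulVec, dotProduct]

lemma mulVec_one_eq_one_of_mul_eq_mul [Fintype ι] {Λ : Matrix ι κ R} {P : Matrix κ κ R}
    {Q : Matrix ι ι R} (hΛ : Λ *ᵥ 1 = 1) (hP : P *ᵥ 1 = 1) (h : Λ * P = Q * Λ) : Q *ᵥ 1 = 1 :=
  calc Q *ᵥ 1 = (Q * Λ) *ᵥ 1 := by rw [← mulVec_mulVec, hΛ]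
    _ = 1 := by rw [← h, ← mulVec_mulVec, hP, hΛ]

lemma sum_vecMul_of_mulVec_one [Fintype ι] {Λ : Matrix ι κ R} (hΛ : Λ *ᵥ 1 = 1) (v : ι → R) :
    ∑ i, (v ᵥ* Λ) i = ∑ j, v j := by
  rw [← dotProduct_one, ← dotProduct_mulVec, hΛ, dotProduct_one]

end RowSums

section TimeReversal

variable {E : Type*}

noncomputable def timeReversal (π : E → ℝ) (P : Matrix E E ℝ) : Matrix E E ℝ :=
  fun j i => π i * P i j / π j

lemma mul_sum_timeReversal {π : E → ℝ} (hπ : ∀ i, π i ≠ 0) (P : Matrix E E ℝ) (s : Finset E)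
    (i : E) : π i * ∑ k ∈ s, timeReversal π P i k = ∑ k ∈ s, π k * P k i := by
  rw [mul_sum]
  exact sum_congr rfl fun k _ => mul_div_cancel₀ _ (hπ i)

lemma timeReversal_nonneg {π : E → ℝ} (hπ : ∀ i, 0 ≤ π i) {P : Matrix E E ℝ}
    (hP : ∀ i j, 0 ≤ P i j) (j i : E) : 0 ≤ timeReversal π P j i :=
  div_nonneg (mul_nonneg (hπ i) (hP i j)) (hπ j)

end TimeReversal

section LowerLink

variable {E : Type*} [LinearOrder E] [LocallyFiniteOrderBot E] {π : E → ℝ}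

def cumMass (π : E → ℝ) (j : E) : ℝ := ∑ k ∈ Iic j, π k

lemma cumMass_nonneg (hπ : ∀ i, 0 ≤ π i) (j : E) : 0 ≤ cumMass π j :=
  sum_nonneg fun k _ => hπ k

lemma cumMass_pos (hπ : ∀ i, 0 < π i) (j : E) : 0 < cumMass π j :=
  sum_pos (fun k _ => hπ k) ⟨j, mem_Iic.2 le_rfl⟩

noncomputable def lowerLink (π : E → ℝ) : Matrix E E ℝ :=
  fun j i => if i ≤ j then π i / cumMass π j else 0

lemma lowerLink_isStochastic [Fintype E] (hπ : ∀ i, 0 < π i) : IsStochastic (lowerLink π) := by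
  refine ⟨fun j i => ?_, fun j => ?_⟩
  · unfold lowerLink
    split_ifs
    exacts [div_nonneg (hπ i).le (cumMass_pos hπ j).le, le_rfl]
  · simp only [lowerLink]
    rw [← sum_filter, filter_ge_eq_Iic, ← sum_div]
    exact div_self (cumMass_pos hπ j).ne'

lemma lowerLink_mul_apply [Fintype E] (P : Matrix E E ℝ) (j i : E) :
    (lowerLink π * P) j i = (∑ k ∈ Iic j, π k * P k i) / cumMass π j := by
  simp only [mul_apply, lowerLink, ite_mul, zero_mul]
  rw [← sum_filter, filter_ge_eq_Iic, sum_div]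
  exact sum_congr rfl fun k _ => div_mul_eq_mul_div _ _ _

end LowerLink

section ExtendByZero

variable {M : ℕ} {α : Type*}

-- `Fin M` is `{1,…,M}` shifted down by one; index `M` is the state `M + 1` of the conventions.
def extendByZero [Zero α] (f : Fin M → α) (n : ℕ) : α :=
  if h : n < M then f ⟨n, h⟩ else 0

lemma extendByZero_val [Zero α] (f : Fin M → α) (i : Fin M) : extendByZero f i = f i := by
  simp [extendByZero]

lemma extendByZero_self [Zero α] (f : Fin M → α) : extendByZero f M = 0 := by
  simp [extendByZero]

lemma sum_extendByZero_apply {ι : Type*} (R : Matrix (Fin M) ι ℝ) (s : Finset ι) (n : ℕ) :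
    ∑ k ∈ s, extendByZero R n k = extendByZero (fun l => ∑ k ∈ s, R l k) n := by
  unfold extendByZero
  split_ifs <;> simp

lemma extendByZero_succ_le [Zero α] [Preorder α] {f : Fin M → α} (hf : Antitone f) {i : Fin M}
    (hi : 0 ≤ f i) : extendByZero f (i + 1) ≤ f i := by
  unfold extendByZero
  split_ifs
  exacts [hf (Fin.mk_le_mk.2 (Nat.le_succ i)), hi]

lemma sum_Ici_sub_extendByZero [AddCommGroup α] (f : Fin M → α) (i : Fin M) :
    ∑ j ∈ Ici i, (f j - extendByZero f (j + 1)) = f i := by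
  calc ∑ j ∈ Ici i, (f j - extendByZero f (j + 1))
      = ∑ n ∈ Ico (i : ℕ) M, (extendByZero f n - extendByZero f (n + 1)) := by
        rw [← Fin.map_valEmbedding_Ici, sum_map]
        simp only [Fin.valEmbedding_apply, extendByZero_val]
    _ = -∑ n ∈ Ico (i : ℕ) M, (extendByZero f (n + 1) - extendByZero f n) := by
        simp only [← sum_neg_distrib, neg_sub]
    _ = f i := by
        rw [sum_Ico_sub _ i.isLt.le, extendByZero_self, extendByZero_val, zero_sub, neg_neg]

end ExtendByZero

section Dual

variable {M : ℕ} {π : Fin M → ℝ}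

noncomputable def dualInit (π g : Fin M → ℝ) : Fin M → ℝ :=
  fun i => cumMass π i * (g i - extendByZero g (i + 1))

noncomputable def dualKernel (π : Fin M → ℝ) (R : Matrix (Fin M) (Fin M) ℝ) :
    Matrix (Fin M) (Fin M) ℝ :=
  fun i j => cumMass π j / cumMass π i *
    (∑ k ∈ Iic i, R j k - ∑ k ∈ Iic i, extendByZero R (j + 1) k)

lemma dualInit_vecMul_lowerLink (hπ : ∀ i, 0 < π i) (g : Fin M → ℝ) :
    dualInit π g ᵥ* lowerLink π = fun i => π i * g i := by
  funext i
  simp only [vecMul, dotProduct, dualInit, lowerLink, mul_ite, mul_zero]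
  rw [← sum_filter, filter_le_eq_Ici, ← sum_Ici_sub_extendByZero g i, mul_sum]
  refine sum_congr rfl fun j _ => ?_
  field_simp [(cumMass_pos hπ j).ne']

lemma dualInit_nonneg (hπ : ∀ i, 0 ≤ π i) {g : Fin M → ℝ} (hg : Antitone g)
    (hg0 : ∀ i, 0 ≤ g i) (i : Fin M) : 0 ≤ dualInit π g i :=
  mul_nonneg (cumMass_nonneg hπ i) (sub_nonneg.2 (extendByZero_succ_le hg (hg0 i)))

lemma dualKernel_nonneg (hπ : ∀ i, 0 ≤ π i) {R : Matrix (Fin M) (Fin M) ℝ}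
    (hR : ∀ j k, 0 ≤ R j k) (hmon : Antitone fun j i => ∑ k ∈ Iic i, R j k) (i j : Fin M) :
    0 ≤ dualKernel π R i j := by
  refine mul_nonneg (div_nonneg (cumMass_nonneg hπ j) (cumMass_nonneg hπ i)) (sub_nonneg.2 ?_)
  rw [sum_extendByZero_apply]
  exact extendByZero_succ_le (fun a b hab => hmon hab i) (sum_nonneg fun k _ => hR j k)

lemma lowerLink_mul_eq_dualKernel_mul (hπ : ∀ i, 0 < π i) (P : Matrix (Fin M) (Fin M) ℝ) :
    lowerLink π * P = dualKernel π (timeReversal π P) * lowerLink π := by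
  ext j i
  have hrhs : (dualKernel π (timeReversal π P) * lowerLink π) j i =
      (dualInit π (fun l => ∑ k ∈ Iic j, timeReversal π P l k) ᵥ* lowerLink π) i /
        cumMass π j := by
    simp only [mul_apply, vecMul, dotProduct, sum_div, dualKernel, dualInit]
    refine sum_congr rfl fun l _ => ?_
    rw [sum_extendByZero_apply]
    ring
  rw [hrhs, dualInit_vecMul_lowerLink hπ, lowerLink_mul_apply]
  exact congrArg (· / cumMass π j) (mul_sum_timeReversal (fun i => (hπ i).ne') P _ i).symm

end Dual

theorem stmt11_general (M : ℕ)
    (P : Matrix (Fin M) (Fin M) ℝ) (hP : IsStochastic P)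
    (π : Fin M → ℝ) (hπpos : ∀ i, 0 < π i)
    (ν : Fin M → ℝ) (hν : IsProbVec ν)
    (Prev : Matrix (Fin M) (Fin M) ℝ) (hPrev : ∀ j i, Prev j i = π i * P i j / π j)
    (H : Fin M → ℝ) (hH : ∀ j, H j = ∑ k ∈ univ.filter (fun k => k ≤ j), π k)
    (g : Fin M → ℝ) (hg : ∀ i, g i = ν i / π i)
    (hgmon : ∀ i j : Fin M, i ≤ j → g j ≤ g i)
    (hstmon : ∀ j j' : Fin M, j ≤ j' → ∀ i : Fin M,
      (∑ k ∈ univ.filter (fun k => k ≤ i), Prev j' k)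
        ≤ ∑ k ∈ univ.filter (fun k => k ≤ i), Prev j k)
    (gext : ℕ → ℝ) (hgext : ∀ n : ℕ, gext n = if h : n < M then g ⟨n, h⟩ else 0)
    (Prevext : ℕ → Fin M → ℝ)
    (hPrevext : ∀ (n : ℕ) (k : Fin M),
      Prevext n k = if h : n < M then Prev ⟨n, h⟩ k else 0)
    (Λ : Matrix (Fin M) (Fin M) ℝ)
    (hΛ : ∀ j i, Λ j i = if i ≤ j then π i / H j else 0)
    (νd : Fin M → ℝ)
    (hνd : ∀ i : Fin M, νd i = H i * (g i - gext ((i : ℕ) + 1)))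
    (Pd : Matrix (Fin M) (Fin M) ℝ)
    (hPd : ∀ i j : Fin M, Pd i j = (H j / H i) *
      ((∑ k ∈ univ.filter (fun k => k ≤ i), Prev j k)
        - ∑ k ∈ univ.filter (fun k => k ≤ i), Prevext ((j : ℕ) + 1) k)) :
    IsStochastic Λ ∧ IsProbVec νd ∧ (∀ i, ν i = ∑ j, νd j * Λ j i) ∧
    IsStochastic Pd ∧ Λ * P = Pd * Λ := by
  simp only [filter_ge_eq_Iic] at hH hstmon hPd
  obtain rfl : H = cumMass π := funext hH
  obtain rfl : Λ = lowerLink π := Matrix.ext hΛ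
  obtain rfl : gext = extendByZero g := funext hgext
  obtain rfl : Prevext = extendByZero Prev := funext₂ fun n k => by
    rw [hPrevext]; unfold extendByZero; split_ifs <;> rfl
  obtain rfl : νd = dualInit π g := funext hνd
  obtain rfl : Pd = dualKernel π Prev := Matrix.ext hPd
  obtain rfl : Prev = timeReversal π P := Matrix.ext hPrev
  have hLink := lowerLink_isStochastic hπpos
  have hπ0 : ∀ i, 0 ≤ π i := fun i => (hπpos i).le
  have hg0 : ∀ i, 0 ≤ g i := fun i => hg i ▸ div_nonneg (hν.1 i) (hπpos i).le
  have hdual : dualInit π g ᵥ* lowerLink π = ν := by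
    rw [dualInit_vecMul_lowerLink hπpos]
    exact funext fun i => by rw [hg, mul_div_cancel₀ _ (hπpos i).ne']
  have hcomm := lowerLink_mul_eq_dualKernel_mul hπpos P
  have hΛ1 := mulVec_one_eq_one_iff.2 hLink.2
  refine ⟨hLink, ⟨dualInit_nonneg hπ0 hgmon hg0, ?_⟩, fun i => congrFun hdual.symm i,
    ⟨dualKernel_nonneg hπ0 (timeReversal_nonneg hπ0 hP.1) hstmon, ?_⟩,
    hcomm⟩
  · rw [← sum_vecMul_of_mulVec_one hΛ1, hdual, hν.2]
  · exact mulVec_one_eq_one_iff.1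
      (mulVec_one_eq_one_of_mul_eq_mul hΛ1 (mulVec_one_eq_one_iff.2 hP.2) hcomm)

/-- strong stationary duality on the linearly ordered state space
`{1,…,M}` (modelled as `Fin M`), ↓-version.  Here `H(j) = Σ_{k ≤ j} π(k)`,
`g = ν/π` is non-increasing, the time reversal `←P` is stochastically monotone,
`Λ(j,i) = 1{i ≤ j} π(i)/H(j)`, `ν*(i) = H(i)(g(i) − g(i+1))` and
`P*(i,j) = (H(j)/H(i))(←P(j,{1,…,i}) − ←P(j+1,{1,…,i}))`, with the conventions
`g(M+1) = 0` and `←P(M+1,·) = 0` (encoded via `gext`, `Prevext`).  Then `Λ` is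
stochastic, `ν*` is a probability vector with `ν = ν*Λ`, and `P*` is stochastic
with `ΛP = P*Λ`. -/
theorem stmt11 (M : ℕ)
    (P : Matrix (Fin M) (Fin M) ℝ) (hP : IsStochastic P)
    (hirr : ∀ i j : Fin M, ∃ n : ℕ, 0 < (P ^ n) i j)
    (π : Fin M → ℝ) (hπ : IsProbVec π) (hπpos : ∀ i, 0 < π i)
    (hstat : ∀ j, ∑ i, π i * P i j = π j)
    (ν : Fin M → ℝ) (hν : IsProbVec ν)
    (Prev : Matrix (Fin M) (Fin M) ℝ) (hPrev : ∀ j i, Prev j i = π i * P i j / π j)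
    (H : Fin M → ℝ) (hH : ∀ j, H j = ∑ k ∈ univ.filter (fun k => k ≤ j), π k)
    (g : Fin M → ℝ) (hg : ∀ i, g i = ν i / π i)
    (hgmon : ∀ i j : Fin M, i ≤ j → g j ≤ g i)
    (hstmon : ∀ j j' : Fin M, j ≤ j' → ∀ i : Fin M,
      (∑ k ∈ univ.filter (fun k => k ≤ i), Prev j' k)
        ≤ ∑ k ∈ univ.filter (fun k => k ≤ i), Prev j k)
    (gext : ℕ → ℝ) (hgext : ∀ n : ℕ, gext n = if h : n < M then g ⟨n, h⟩ else 0)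
    (Prevext : ℕ → Fin M → ℝ)
    (hPrevext : ∀ (n : ℕ) (k : Fin M),
      Prevext n k = if h : n < M then Prev ⟨n, h⟩ k else 0)
    (Λ : Matrix (Fin M) (Fin M) ℝ)
    (hΛ : ∀ j i, Λ j i = if i ≤ j then π i / H j else 0)
    (νd : Fin M → ℝ)
    (hνd : ∀ i : Fin M, νd i = H i * (g i - gext ((i : ℕ) + 1)))
    (Pd : Matrix (Fin M) (Fin M) ℝ)
    (hPd : ∀ i j : Fin M, Pd i j = (H j / H i) *
      ((∑ k ∈ univ.filter (fun k => k ≤ i), Prev j k)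
        - ∑ k ∈ univ.filter (fun k => k ≤ i), Prevext ((j : ℕ) + 1) k)) :
    IsStochastic Λ ∧ IsProbVec νd ∧ (∀ i, ν i = ∑ j, νd j * Λ j i) ∧
    IsStochastic Pd ∧ Λ * P = Pd * Λ :=
  stmt11_general M P hP π hπpos ν hν Prev hPrev H hH g hg hgmon hstmon gext hgext Prevext hPrevext Λ
    hΛ νd hνd Pd hPd
end

section
/- For the random walk on the d-dimensional cube E = {0,1}^d with parameters α_i, β_i > 0 (transitions P(e, e+s_i) = α_i when e_i = 0, P(e, e−s_i) = β_i when e_i = 1, P(e,e) = 1 − Σ_{i: e_i=0} α_i − Σ_{i: e_i=1} β_i, all other entries 0), assuming all diagonal entries are nonnegative: P is ↓-Möbius monotone if and only if Σ_{i=1}^d α_i + Σ_{i=1}^d β_i ≤ 1. -/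
open Finset Matrix

instance {d : ℕ} :
    DecidableRel ((· ≤ ·) : (Fin d → Bool) → (Fin d → Bool) → Prop) :=
  fun e e' => decidable_of_iff (∀ i, e i ≤ e' i) Pi.le_def.symm

/-- Transition matrix of the random walk on the `d`-dimensional cube
`{0,1}^d`: from `e`, coordinate `i` flips `0 → 1` with probability `α i`,
flips `1 → 0` with probability `β i`, and the walk stays at `e` with the
remaining probability; all other transitions have probability `0`. -/
noncomputable def cubeP {d : ℕ} (α β : Fin d → ℝ) :
    Matrix (Fin d → Bool) (Fin d → Bool) ℝ :=
  Matrix.of fun e e' =>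
    (if e' = e then
        1 - (∑ i ∈ univ.filter (fun i => e i = false), α i)
          - (∑ i ∈ univ.filter (fun i => e i = true), β i)
      else 0)
    + ∑ i, ((if e i = false ∧ e' = Function.update e i true then α i else 0)
          + (if e i = true ∧ e' = Function.update e i false then β i else 0))

/-- The stationary distribution of the cube walk:
`π(e) = Π_{i : e_i = 1} α_i/(α_i+β_i) · Π_{i : e_i = 0} β_i/(α_i+β_i)`. -/
noncomputable def cubePi {d : ℕ} (α β : Fin d → ℝ) : (Fin d → Bool) → ℝ :=
  fun e => ∏ i, (if e i then α i / (α i + β i) else β i / (α i + β i))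

/-!
Both the walk and the zeta matrix split along coordinates. With rows and columns indexed
`false, true`, `cubeP = 1 + ∑ i, Lᵢ qᵢ`, where `Lᵢ q` lets the 2×2 generator
`qᵢ = [[-αᵢ, αᵢ], [βᵢ, -βᵢ]]` act on coordinate `i` alone, and `C = ⊗ᵢ c` with
`c = [[1, 1], [0, 1]]`. Since `C` commutes past `Lᵢ` up to replacing `q` by `c⁻¹ q c`,
`C⁻¹ cubeP C = 1 + ∑ i, Lᵢ (c⁻¹ qᵢ c)` with `c⁻¹ qᵢ c = [[-(αᵢ + βᵢ), 0], [βᵢ, 0]]`.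
Off the diagonal this matrix has entries `0` or `βᵢ`; its diagonal entry at `e` is
`1 - ∑_{eᵢ = 0} (αᵢ + βᵢ)`, smallest at `e = ⊥`.
-/

open Function

namespace Cube

section Tensor

variable {ι : Type*} [Fintype ι]

noncomputable def piTensor (A : ι → Matrix Bool Bool ℝ) : Matrix (ι → Bool) (ι → Bool) ℝ :=
  of fun e e' => ∏ i, A i (e i) (e' i)

lemma piTensor_one : piTensor (1 : ι → Matrix Bool Bool ℝ) = 1 := by
  ext e e'
  simp only [piTensor, of_apply, Pi.one_apply, one_apply, Fintype.prod_boole, funext_iff]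

variable [DecidableEq ι]

lemma piTensor_mul_piTensor (A B : ι → Matrix Bool Bool ℝ) :
    piTensor A * piTensor B = piTensor (A * B) := by
  ext e e''
  simp only [piTensor, mul_apply, of_apply, Pi.mul_apply, ← prod_mul_distrib]
  exact (Fintype.prod_sum fun i b => A i (e i) b * B i b (e'' i)).symm

noncomputable def coordLift (i : ι) (A : Matrix Bool Bool ℝ) : Matrix (ι → Bool) (ι → Bool) ℝ :=
  piTensor (update 1 i A)

lemma coordLift_apply (i : ι) (A : Matrix Bool Bool ℝ) (e e' : ι → Bool) :
    coordLift i A e e' = if ∀ j ≠ i, e j = e' j then A (e i) (e' i) else 0 := by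
  rw [coordLift, piTensor, of_apply, Fintype.prod_eq_mul_prod_compl i, update_self,
    prod_congr rfl fun j hj => by rw [update_of_ne (by simpa using hj)]]
  simp only [Pi.one_apply, one_apply, prod_boole, mem_compl, mem_singleton, mul_ite, mul_one,
    mul_zero]

lemma coordLift_apply_self (i : ι) (A : Matrix Bool Bool ℝ) (e : ι → Bool) :
    coordLift i A e e = A (e i) (e i) := by
  simp [coordLift_apply]

lemma coordLift_apply_nonneg_of_ne {i : ι} {A : Matrix Bool Bool ℝ}
    (hA : ∀ x y, x ≠ y → 0 ≤ A x y) {e e' : ι → Bool} (h : e ≠ e') :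
    0 ≤ coordLift i A e e' := by
  rw [coordLift_apply]
  split_ifs with hagree
  · refine hA _ _ fun hi => h (funext fun j => ?_)
    by_cases hj : j = i
    · exact hj ▸ hi
    · exact hagree j hj
  · exact le_rfl

end Tensor

variable {d : ℕ}

lemma zeta_eq_piTensor : zeta (Fin d → Bool) = piTensor fun _ => zeta Bool := by
  ext e e'
  simp only [zeta, piTensor, of_apply, Fintype.prod_boole, Pi.le_def]
  congr

noncomputable def zetaInvBool : Matrix Bool Bool ℝ :=
  of fun x y => if x = y then 1 else if x ≤ y then -1 else 0

lemma zeta_mul_zetaInvBool : zeta Bool * zetaInvBool = 1 := by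
  ext x y
  cases x <;> cases y <;> simp +decide [zeta, zetaInvBool, mul_apply]

lemma isUnit_det_zeta : IsUnit (zeta (Fin d → Bool)).det := by
  refine isUnit_det_of_right_inverse (B := piTensor fun _ => zetaInvBool) ?_
  rw [zeta_eq_piTensor, piTensor_mul_piTensor]
  convert piTensor_one using 2
  exact funext fun _ => zeta_mul_zetaInvBool

lemma zeta_mul_coordLift {i : Fin d} {A B : Matrix Bool Bool ℝ}
    (h : zeta Bool * A = B * zeta Bool) :
    zeta (Fin d → Bool) * coordLift i A = coordLift i B * zeta (Fin d → Bool) := by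
  rw [zeta_eq_piTensor, coordLift, coordLift, piTensor_mul_piTensor, piTensor_mul_piTensor]
  congr 1
  funext j
  by_cases hj : j = i
  · subst hj; simpa using h
  · simp [update_of_ne hj]

def flipGenerator (a b : ℝ) : Matrix Bool Bool ℝ :=
  of fun
    | false, false => -a
    | false, true => a
    | true, false => b
    | true, true => -b

def dualFlipGenerator (a b : ℝ) : Matrix Bool Bool ℝ :=
  of fun
    | false, false => -(a + b)
    | true, false => b
    | _, true => 0

lemma zeta_mul_dualFlipGenerator (a b : ℝ) :
    zeta Bool * dualFlipGenerator a b = flipGenerator a b * zeta Bool := by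
  ext x y
  cases x <;> cases y <;> simp +decide [zeta, flipGenerator, dualFlipGenerator, mul_apply]

lemma coordLift_flipGenerator_apply (i : Fin d) (a b : ℝ) (e e' : Fin d → Bool) :
    coordLift i (flipGenerator a b) e e' =
      (if e i = false ∧ e' = update e i true then a else 0)
        + (if e i = true ∧ e' = update e i false then b else 0)
        - if e' = e then (if e i then b else a) else 0 := by
  rw [coordLift_apply]
  by_cases hagree : ∀ j ≠ i, e j = e' j
  · obtain ⟨c, rfl⟩ : ∃ c, e' = update e i c :=
      ⟨e' i, eq_update_iff.mpr ⟨rfl, fun j hj => (hagree j hj).symm⟩⟩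
    rw [if_pos hagree]
    cases hi : e i <;> cases c <;> simp [hi, flipGenerator, (update_injective e i).eq_iff]
  · have hupdate : ∀ c, e' ≠ update e i c := fun c h =>
      hagree fun j hj => by rw [h, update_of_ne hj]
    have hne : e' ≠ e := fun h => hagree fun j _ => by rw [h]
    simp [hagree, hupdate, hne]

lemma cubeP_eq (α β : Fin d → ℝ) :
    cubeP α β = 1 + ∑ i, coordLift i (flipGenerator (α i) (β i)) := by
  ext e e'
  simp only [cubeP, of_apply, Matrix.add_apply, one_apply, Matrix.sum_apply,
    coordLift_flipGenerator_apply, sum_sub_distrib, sum_add_distrib]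
  rcases eq_or_ne e' e with rfl | hne
  · simp only [if_true, sum_ite, Bool.not_eq_true]
    ring
  · simp [hne, hne.symm]

noncomputable def cubeDual (α β : Fin d → ℝ) : Matrix (Fin d → Bool) (Fin d → Bool) ℝ :=
  1 + ∑ i, coordLift i (dualFlipGenerator (α i) (β i))

lemma zeta_mul_cubeDual (α β : Fin d → ℝ) :
    zeta (Fin d → Bool) * cubeDual α β = cubeP α β * zeta (Fin d → Bool) := by
  rw [cubeDual, cubeP_eq, Matrix.mul_add, Matrix.add_mul, Matrix.mul_one, Matrix.one_mul,
    mul_sum, sum_mul]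
  exact congrArg _ (sum_congr rfl fun i _ => zeta_mul_coordLift (zeta_mul_dualFlipGenerator _ _))

lemma zeta_inv_mul_cubeP_mul_zeta (α β : Fin d → ℝ) :
    (zeta (Fin d → Bool))⁻¹ * cubeP α β * zeta (Fin d → Bool) = cubeDual α β := by
  rw [Matrix.mul_assoc, ← zeta_mul_cubeDual]
  exact nonsing_inv_mul_cancel_left _ _ isUnit_det_zeta

lemma cubeDual_apply_self (α β : Fin d → ℝ) (e : Fin d → Bool) :
    cubeDual α β e e = 1 + ∑ i, dualFlipGenerator (α i) (β i) (e i) (e i) := by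
  simp [cubeDual, Matrix.sum_apply, coordLift_apply_self]

lemma cubeDual_apply_bot (α β : Fin d → ℝ) : cubeDual α β ⊥ ⊥ = 1 - ∑ i, (α i + β i) := by
  simp [cubeDual_apply_self, dualFlipGenerator, sub_eq_add_neg, sum_add_distrib]

lemma cubeDual_apply_bot_le_apply_self {α β : Fin d → ℝ} (hαβ : ∀ i, 0 ≤ α i + β i)
    (e : Fin d → Bool) : cubeDual α β ⊥ ⊥ ≤ cubeDual α β e e := by
  simp only [cubeDual_apply_self]
  gcongr with i
  have := hαβ i
  cases e i <;> simp [dualFlipGenerator]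
  linarith

lemma cubeDual_apply_nonneg_of_ne {α β : Fin d → ℝ} (hβ : ∀ i, 0 ≤ β i)
    {e e' : Fin d → Bool} (h : e ≠ e') : 0 ≤ cubeDual α β e e' := by
  rw [cubeDual, Matrix.add_apply, one_apply_ne h, zero_add, Matrix.sum_apply]
  refine sum_nonneg fun i _ => coordLift_apply_nonneg_of_ne (fun x y hxy => ?_) h
  cases x <;> cases y <;> simp_all [dualFlipGenerator]

end Cube

theorem stmt13_general {d : ℕ} (α β : Fin d → ℝ)
    (hα : ∀ i, 0 < α i) (hβ : ∀ i, 0 < β i) :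
    (∀ e e', 0 ≤ ((zeta (Fin d → Bool))⁻¹ * cubeP α β * zeta (Fin d → Bool)) e e')
    ↔ (∑ i, α i) + (∑ i, β i) ≤ 1 := by
  simp only [Cube.zeta_inv_mul_cubeP_mul_zeta]
  rw [← sum_add_distrib, ← sub_nonneg, ← Cube.cubeDual_apply_bot]
  refine ⟨fun h => h ⊥ ⊥, fun hbot e e' => ?_⟩
  rcases eq_or_ne e e' with rfl | hne
  · exact hbot.trans (Cube.cubeDual_apply_bot_le_apply_self (fun i => by linarith [hα i, hβ i]) e)
  · exact Cube.cubeDual_apply_nonneg_of_ne (fun i => (hβ i).le) hne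

/-- the cube walk is ↓-Möbius monotone (every entry of
`C⁻¹ P C` is nonnegative) iff `Σ α_i + Σ β_i ≤ 1`. -/
theorem stmt13 {d : ℕ} (α β : Fin d → ℝ)
    (hα : ∀ i, 0 < α i) (hβ : ∀ i, 0 < β i)
    (hdiag : ∀ e, 0 ≤ cubeP α β e e) :
    (∀ e e', 0 ≤ ((zeta (Fin d → Bool))⁻¹ * cubeP α β * zeta (Fin d → Bool)) e e')
    ↔ (∑ i, α i) + (∑ i, β i) ≤ 1 :=
  stmt13_general α β hα hβ
end

section
/- For the random walk on the d-dimensional cube E = {0,1}^d with parameters α_i, β_i > 0 (transitions P(e, e+s_i) = α_i when e_i = 0, P(e, e−s_i) = β_i when e_i = 1, P(e,e) = 1 − Σ_{i: e_i=0} α_i − Σ_{i: e_i=1} β_i, all other entries 0), assume Σ_{i=1}^d α_i + Σ_{i=1}^d β_i ≤ 1. Let π be its stationary distribution π(e) = Π_{i: e_i=1} α_i/(α_i+β_i) · Π_{i: e_i=0} β_i/(α_i+β_i), H(e) = Σ_{e'≤e} π(e'), and define the dual matrix P*(e,e') = (H(e')/H(e))·Σ_{e''≥e'} μ(e',e'')·P(e'',{e}↓)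 (the chain being reversible, its time reversal equals P). Then: P*(e, e+s_i) = α_i + β_i for every i with e_i = 0; P*(e,e) = 1 − Σ_{i: e_i=0}(α_i + β_i); and P*(e,e') = 0 for every other e' ≠ e (in particular P*(e, e−s_i) = 0 for every i with e_i = 1). Consequently P* is an upper-triangular stochastic matrix which moves only upwards to nearest neighbors. -/
open Finset Matrix

/-!
With `ζ` the zeta matrix, `Σ_{e'' ≥ e'} μ(e',e'') P(e'',{e}↓)` is the entry `(ζ⁻¹ P ζ)(e',e)`.
The cube walk satisfies the intertwining `P ζ = ζ Kᵀ`, where `K` holds at `e` with weight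
`1 - Σ_{e_i = 0} (α_i + β_i)` and moves from `e` to `e + s_i` with weight `β_i`; this is checked
one coordinate at a time. Hence `P*(e,e') = H(e')/H(e) · K(e,e')`, and since
`H(e) = Π_{e_i = 0} β_i/(α_i + β_i)`, the ratio `H(e + s_i)/H(e) = (α_i + β_i)/β_i` turns the
weight `β_i` into `α_i + β_i`.
-/

section Moebius

variable {E : Type*} [Fintype E] [PartialOrder E] [DecidableEq E]
  [DecidableRel ((· ≤ ·) : E → E → Prop)]

lemma zeta_mul_mu [LocallyFiniteOrder E] :
    zeta E * Matrix.of (fun a b => IncidenceAlgebra.mu ℝ a b) = 1 := by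
  ext a b
  have hterm : ∀ x, zeta E a x * IncidenceAlgebra.mu ℝ x b
      = if x ∈ Icc a b then IncidenceAlgebra.mu ℝ x b else 0 := by
    intro x
    by_cases hxb : x ≤ b
    · simp [zeta, hxb]
    · simp [zeta, hxb, IncidenceAlgebra.apply_eq_zero_of_not_le hxb]
  simp only [Matrix.mul_apply, Matrix.of_apply, hterm, Finset.sum_ite_mem, univ_inter,
    IncidenceAlgebra.sum_Icc_mu_left, Matrix.one_apply]

lemma inv_zeta_mul_zeta : (zeta E)⁻¹ * zeta E = 1 := by
  classical
  let _ := Fintype.toLocallyFiniteOrder (α := E)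
  rw [Matrix.inv_eq_right_inv zeta_mul_mu]
  exact mul_eq_one_comm.mp zeta_mul_mu

lemma inv_zeta_apply_of_not_le {a b : E} (h : ¬a ≤ b) : (zeta E)⁻¹ a b = 0 := by
  classical
  let _ := Fintype.toLocallyFiniteOrder (α := E)
  rw [Matrix.inv_eq_right_inv zeta_mul_mu, Matrix.of_apply,
    IncidenceAlgebra.apply_eq_zero_of_not_le h]

lemma sum_inv_zeta_mul_sum_Iic_of_mul_zeta_eq {P K : Matrix E E ℝ}
    (hPK : P * zeta E = zeta E * K) (e e' : E) :
    ∑ e'' ∈ univ.filter (fun e'' => e' ≤ e''), (zeta E)⁻¹ e' e'' *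
      ∑ y ∈ univ.filter (fun y => y ≤ e), P e'' y = K e' e := by
  have hF : ∀ x, ∑ y ∈ univ.filter (fun y => y ≤ e), P x y = (P * zeta E) x e := by
    simp [Matrix.mul_apply, zeta, sum_filter]
  have hμ : ∀ e'', (if e' ≤ e'' then (zeta E)⁻¹ e' e'' * (P * zeta E) e'' e else 0)
      = (zeta E)⁻¹ e' e'' * (P * zeta E) e'' e := by
    intro e''
    split_ifs with h
    · rfl
    · rw [inv_zeta_apply_of_not_le h, zero_mul]
  simp only [hF, sum_filter, hμ]
  rw [← Matrix.mul_apply, hPK, ← Matrix.mul_assoc, inv_zeta_mul_zeta, Matrix.one_mul]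

end Moebius

theorem le_iff_apply_le_and_forall_ne {ι : Type*} {π : ι → Type*} [DecidableEq ι]
    [∀ i, Preorder (π i)] {x y : ∀ i, π i} (i : ι) :
    x ≤ y ↔ x i ≤ y i ∧ ∀ j ≠ i, x j ≤ y j := by
  simpa using le_update_iff (x := x) (y := y) (i := i) (a := y i)

theorem prod_apply_update_mul {ι : Type*} [Fintype ι] [DecidableEq ι] {κ : Type*}
    (g : ι → κ → ℝ) (e : ι → κ) (i : ι) (b : κ) :
    (∏ j, g j (Function.update e i b j)) * g i (e i) = g i b * ∏ j, g j (e j) := by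
  rw [Fintype.prod_eq_mul_prod_compl i, Fintype.prod_eq_mul_prod_compl i (fun j => g j (e j)),
    Function.update_self]
  have hcompl : ∏ j ∈ {i}ᶜ, g j (Function.update e i b j) = ∏ j ∈ {i}ᶜ, g j (e j) :=
    prod_congr rfl fun j hj => by
      rw [Function.update_of_ne (by simpa using hj)]
  rw [hcompl]
  ring

section Cube

variable {d : ℕ}

noncomputable def cubeUpward (c : (Fin d → Bool) → ℝ) (w : Fin d → ℝ) :
    Matrix (Fin d → Bool) (Fin d → Bool) ℝ :=
  Matrix.of fun e e' =>
    (if e' = e then c e else 0)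
      + ∑ i, if e i = false ∧ e' = Function.update e i true then w i else 0

section Upward

variable (c : (Fin d → Bool) → ℝ) (w : Fin d → ℝ)

theorem update_true_ne_self {e : Fin d → Bool} {i : Fin d} (hi : e i = false) :
    Function.update e i true ≠ e := fun h => by
  simpa [hi] using congrFun h i

theorem cubeUpward_apply_self (e : Fin d → Bool) : cubeUpward c w e e = c e := by
  rw [cubeUpward, Matrix.of_apply, if_pos rfl, add_eq_left]
  exact sum_eq_zero fun i _ => if_neg fun h => update_true_ne_self h.1 h.2.symm

theorem cubeUpward_apply_update {e : Fin d → Bool} {i : Fin d} (hi : e i = false) :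
    cubeUpward c w e (Function.update e i true) = w i := by
  rw [cubeUpward, Matrix.of_apply, if_neg (update_true_ne_self hi), zero_add,
    sum_eq_single i]
  · simp [hi]
  · intro j _ hji
    refine if_neg fun h => ?_
    simpa [Function.update_of_ne hji, h.1] using congrFun h.2 j
  · simp

theorem cubeUpward_apply_eq_zero {e e' : Fin d → Bool} (hne : e' ≠ e)
    (hup : ¬∃ i, e i = false ∧ e' = Function.update e i true) : cubeUpward c w e e' = 0 := by
  rw [cubeUpward, Matrix.of_apply, if_neg hne, zero_add]
  exact sum_eq_zero fun i _ => if_neg fun h => hup ⟨i, h⟩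

theorem sum_cubeUpward_apply (e : Fin d → Bool) :
    ∑ e', cubeUpward c w e e' = c e + ∑ i ∈ univ.filter (fun i => e i = false), w i := by
  simp only [cubeUpward, Matrix.of_apply, sum_add_distrib, sum_ite_eq', mem_univ, if_true]
  rw [sum_comm, sum_filter]
  simp [ite_and]

theorem isStochastic_cubeUpward (hc : ∀ e, 0 ≤ c e) (hw : ∀ i, 0 ≤ w i)
    (hrow : ∀ e, c e + ∑ i ∈ univ.filter (fun i => e i = false), w i = 1) :
    IsStochastic (cubeUpward c w) := by
  refine ⟨fun e e' => ?_, fun e => (sum_cubeUpward_apply c w e).trans (hrow e)⟩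
  refine add_nonneg ?_ (sum_nonneg fun i _ => ?_) <;> split_ifs
  exacts [hc e, le_rfl, hw i, le_rfl]

theorem zeta_mul_cubeUpward_transpose_apply (x e : Fin d → Bool) :
    (zeta (Fin d → Bool) * (cubeUpward c w)ᵀ) x e
      = (if x ≤ e then c e else 0)
        + ∑ i, if e i = false ∧ x ≤ Function.update e i true then w i else 0 := by
  simp only [Matrix.mul_apply, Matrix.transpose_apply, cubeUpward, zeta, Matrix.of_apply,
    mul_add, mul_sum, mul_ite, mul_zero, sum_add_distrib]
  rw [sum_comm (f := fun y i => _)]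
  simp [ite_and]

theorem cubeUpward_doob (h : (Fin d → Bool) → ℝ) (hh : ∀ e, h e ≠ 0) (w' : Fin d → ℝ)
    (hw : ∀ e i, e i = false → h (Function.update e i true) / h e * w i = w' i)
    (e e' : Fin d → Bool) :
    h e' / h e * cubeUpward c w e e' = cubeUpward c w' e e' := by
  simp only [cubeUpward, Matrix.of_apply, mul_add, mul_sum, mul_ite, mul_zero]
  congr 1
  · split_ifs with he
    · rw [he, div_self (hh e), one_mul]
    · rfl
  · refine sum_congr rfl fun i _ => ?_
    split_ifs with hi
    · rw [hi.2, hw e i hi.1]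
    · rfl

end Upward

variable (α β : Fin d → ℝ)

noncomputable def cubeRate (x : Fin d → Bool) (i : Fin d) : ℝ := if x i then β i else α i

noncomputable def cubeHold (e : Fin d → Bool) : ℝ :=
  1 - ∑ i ∈ univ.filter (fun i => e i = false), (α i + β i)

theorem cubeP_apply (x y : Fin d → Bool) :
    cubeP α β x y = (if y = x then 1 - ∑ i, cubeRate α β x i else 0)
      + ∑ i, if y = Function.update x i (!x i) then cubeRate α β x i else 0 := by
  have hrates : (∑ i ∈ univ.filter (fun i => x i = false), α i)
      + (∑ i ∈ univ.filter (fun i => x i = true), β i) = ∑ i, cubeRate α β x i := by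
    rw [sum_filter, sum_filter, ← sum_add_distrib]
    exact sum_congr rfl fun i _ => by cases hx : x i <;> simp [cubeRate, hx]
  rw [cubeP, Matrix.of_apply, sub_sub, hrates]
  congr 1
  exact sum_congr rfl fun i _ => by cases hx : x i <;> simp [cubeRate, hx]

theorem cubeP_mul_zeta_apply (x e : Fin d → Bool) :
    (cubeP α β * zeta (Fin d → Bool)) x e
      = (if x ≤ e then 1 - ∑ i, cubeRate α β x i else 0)
        + ∑ i, if Function.update x i (!x i) ≤ e then cubeRate α β x i else 0 := by
  simp only [Matrix.mul_apply, cubeP_apply, zeta, Matrix.of_apply, add_mul, sum_mul, ite_mul,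
    zero_mul, sum_add_distrib]
  rw [sum_comm (f := fun y i => _)]
  simp

theorem cubeP_mul_zeta_coord (x e : Fin d → Bool) (i : Fin d) :
    (if Function.update x i (!x i) ≤ e then cubeRate α β x i else 0)
        - (if x ≤ e then cubeRate α β x i else 0)
      = (if e i = false ∧ x ≤ Function.update e i true then β i else 0)
        - (if x ≤ e ∧ e i = false then α i + β i else 0) := by
  simp only [update_le_iff, le_update_iff, le_iff_apply_le_and_forall_ne i (x := x) (y := e)]
  by_cases hR : ∀ j ≠ i, x j ≤ e j
  · simp only [eq_true hR, and_true]
    cases hx : x i <;> cases he : e i <;> simp [hx, cubeRate, (by decide : ¬(true ≤ false))]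
  · simp [eq_false hR]

theorem cubeP_mul_zeta :
    cubeP α β * zeta (Fin d → Bool)
      = zeta (Fin d → Bool) * (cubeUpward (cubeHold α β) β)ᵀ := by
  ext x e
  rw [cubeP_mul_zeta_apply, zeta_mul_cubeUpward_transpose_apply, cubeHold, sum_filter]
  have hcoord := sum_congr rfl fun i (_ : i ∈ univ) => cubeP_mul_zeta_coord α β x e i
  simp only [sum_sub_distrib] at hcoord
  by_cases hxe : x ≤ e <;> simp only [hxe, true_and, false_and, if_true, if_false,
    sum_const_zero, sub_zero] at hcoord ⊢ <;> linarith

theorem sum_Iic_cubePi (hαβ : ∀ i, α i + β i ≠ 0) (e : Fin d → Bool) :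
    ∑ e' ∈ univ.filter (fun e' => e' ≤ e), cubePi α β e'
      = ∏ i, if e i then 1 else β i / (α i + β i) := by
  have hIic : univ.filter (fun e' : Fin d → Bool => e' ≤ e)
      = Fintype.piFinset fun i => univ.filter (fun b => b ≤ e i) := by
    ext x
    simp [Fintype.mem_piFinset, Pi.le_def]
  rw [hIic]
  unfold cubePi
  rw [← prod_univ_sum (fun i => univ.filter (fun b => b ≤ e i))
    (fun i b => if b then α i / (α i + β i) else β i / (α i + β i))]
  refine prod_congr rfl fun i _ => ?_
  cases e i
  · simp [filter_eq', show ∀ b : Bool, b ≤ false ↔ b = false by decide]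
  · simp [← add_div, div_self (hαβ i)]

theorem cubeHold_nonneg (hαβ : ∀ i, 0 ≤ α i + β i)
    (hsum : (∑ i, α i) + (∑ i, β i) ≤ 1) (e : Fin d → Bool) : 0 ≤ cubeHold α β e := by
  have hsub : ∑ i ∈ univ.filter (fun i => e i = false), (α i + β i) ≤ ∑ i, (α i + β i) :=
    sum_le_sum_of_subset_of_nonneg (filter_subset _ _) fun i _ _ => hαβ i
  rw [cubeHold]
  linarith [sum_add_distrib (s := univ) (f := α) (g := β)]

end Cube

/-- for the cube walk with `Σ α_i + Σ β_i ≤ 1`, the strong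
stationary dual `P*(e,e') = (H(e')/H(e)) Σ_{e'' ≥ e'} μ(e',e'') P(e'',{e}↓)`
(the walk is reversible, so `←P = P`) moves only upwards to nearest neighbors:
`P*(e,e+s_i) = α_i + β_i` for `e_i = 0`, `P*(e,e) = 1 − Σ_{i: e_i=0}(α_i+β_i)`,
all other entries vanish, and `P*` is stochastic. -/
theorem stmt15 {d : ℕ} (α β : Fin d → ℝ)
    (hα : ∀ i, 0 < α i) (hβ : ∀ i, 0 < β i)
    (hsum : (∑ i, α i) + (∑ i, β i) ≤ 1)
    (H : (Fin d → Bool) → ℝ)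
    (hH : ∀ e, H e = ∑ e' ∈ univ.filter (fun e' => e' ≤ e), cubePi α β e')
    (Pd : Matrix (Fin d → Bool) (Fin d → Bool) ℝ)
    (hPd : ∀ e e', Pd e e' = (H e' / H e) *
      ∑ e'' ∈ univ.filter (fun e'' => e' ≤ e''), (zeta (Fin d → Bool))⁻¹ e' e'' *
        (∑ e''' ∈ univ.filter (fun e''' => e''' ≤ e), cubeP α β e'' e''')) :
    (∀ (e : Fin d → Bool) (i : Fin d), e i = false →
        Pd e (Function.update e i true) = α i + β i) ∧
    (∀ e : Fin d → Bool,
        Pd e e = 1 - ∑ i ∈ univ.filter (fun i => e i = false), (α i + β i)) ∧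
    (∀ e e' : Fin d → Bool, e' ≠ e →
        (¬ ∃ i, e i = false ∧ e' = Function.update e i true) → Pd e e' = 0) ∧
    IsStochastic Pd := by
  have hαβ i : 0 < α i + β i := add_pos (hα i) (hβ i)
  have hH_prod e : H e = ∏ i, if e i then 1 else β i / (α i + β i) :=
    (hH e).trans (sum_Iic_cubePi α β (fun i => (hαβ i).ne') e)
  have hH_pos e : 0 < H e := by
    rw [hH_prod]
    refine prod_pos fun i _ => ?_
    split_ifs
    exacts [one_pos, div_pos (hβ i) (hαβ i)]
  have hH_up e i (hi : e i = false) : H (Function.update e i true) / H e * β i = α i + β i := by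
    have := prod_apply_update_mul (fun j (b : Bool) => if b then 1 else β j / (α j + β j)) e i true
    simp only [hi, Bool.false_eq_true, if_false, if_true, one_mul, ← hH_prod] at this
    field_simp [(hH_pos e).ne', (hβ i).ne', (hαβ i).ne'] at this ⊢
    linarith
  have hPd_eq : Pd = cubeUpward (cubeHold α β) (fun i => α i + β i) := by
    ext e e'
    rw [hPd, sum_inv_zeta_mul_sum_Iic_of_mul_zeta_eq (cubeP_mul_zeta α β), transpose_apply,
      cubeUpward_doob _ _ H (fun e => (hH_pos e).ne') _ hH_up]
  subst hPd_eq
  refine ⟨fun e i hi => cubeUpward_apply_update _ _ hi, fun e => cubeUpward_apply_self _ _ e,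
    fun e e' hne hup => cubeUpward_apply_eq_zero _ _ hne hup,
    isStochastic_cubeUpward _ _ (cubeHold_nonneg α β (fun i => (hαβ i).le) hsum) (fun i => (hαβ i).le)
      fun e => by simp [cubeHold]⟩
end

section
/- For the random walk on the d-dimensional cube E = {0,1}^d with parameters α_i, β_i > 0 and Σ_{i=1}^d α_i + Σ_{i=1}^d β_i ≤ 1 (transitions P(e, e+s_i) = α_i when e_i = 0, P(e, e−s_i) = β_i when e_i = 1, P(e,e) = 1 − Σ_{i: e_i=0} α_i − Σ_{i: e_i=1} β_i, all other entries 0), with stationary distribution π(e) = Π_{i: e_i=1} α_i/(α_i+β_i) · Π_{i: e_i=0} β_i/(α_i+β_i): for every n ≥ 1, the separation distance from stationarity after n steps starting at the minimal state (0,…,0) equals s(δ_{(0,…,0)}Pⁿ, π) = Σ_{k=1}^d (−1)^{k−1} Σ_{γ ⊆ {1,…,d}, |γ|=k} (1 − s_γ)ⁿ, where s_γ = Σ_{i∈γ}(α_i + β_i). -/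
open Finset Matrix

/-!
The functions `e ↦ ∏_{i∈γ} (if e i then -β i else α i)` are eigenvectors of `cubeP α β` with
eigenvalues `1 - s_γ`. Expanding the point mass at `e` in this eigenbasis gives
`Pⁿ(0,e) / π(e) = ∑_γ (1 - s_γ)ⁿ ∏_{i∈γ} (x_i - 1)`, where `x_i = 0` if `e i` and
`x_i = (α i + β i) / β i ≥ 0` otherwise. As a polynomial in the `x_i`, its coefficients are
iterated backward differences of `t ↦ tⁿ` with steps `α i + β i ≥ 0`, taken at a point that
dominates the sum of the steps (this is where `∑ α + ∑ β ≤ 1` enters), so they are nonnegative.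
Hence the ratio is smallest at the all-ones state, where every `x_i` vanishes and it equals
`∑_γ (-1)^|γ| (1 - s_γ)ⁿ`; grouping by `|γ|` gives the formula.
-/

section Powerset

variable {ι : Type*}

noncomputable def backwardDiffPow [DecidableEq ι] (v : ι → ℝ) (n : ℕ) (y : ℝ) (S : Finset ι) : ℝ :=
  ∑ U ∈ S.powerset, (-1) ^ #U * (y - ∑ i ∈ U, v i) ^ n

lemma backwardDiffPow_zero [DecidableEq ι] (v : ι → ℝ) (y : ℝ) (S : Finset ι) :
    backwardDiffPow v 0 y S = if S = ∅ then 1 else 0 := by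
  simp only [backwardDiffPow, pow_zero, mul_one]
  exact_mod_cast sum_powerset_neg_one_pow_card

lemma backwardDiffPow_succ [DecidableEq ι] (v : ι → ℝ) (n : ℕ) (y : ℝ) (S : Finset ι) :
    backwardDiffPow v (n + 1) y S =
      (y - ∑ i ∈ S, v i) * backwardDiffPow v n y S +
        ∑ j ∈ S, v j * backwardDiffPow v n y (S.erase j) := by
  have hsplit : ∀ U ∈ S.powerset, (-1) ^ #U * (y - ∑ i ∈ U, v i) ^ (n + 1) =
      (y - ∑ i ∈ S, v i) * ((-1) ^ #U * (y - ∑ i ∈ U, v i) ^ n) +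
        ∑ j ∈ S \ U, v j * ((-1) ^ #U * (y - ∑ i ∈ U, v i) ^ n) := by
    intro U hU
    rw [← sum_mul, ← sum_sdiff (mem_powerset.mp hU) (f := v)]
    ring
  rw [backwardDiffPow, sum_congr rfl hsplit, sum_add_distrib, ← mul_sum,
    sum_comm' (t' := S) (s' := fun j => (S.erase j).powerset)]
  · simp only [backwardDiffPow, mul_sum]
  · intro U j
    simp only [mem_powerset, mem_sdiff, subset_erase]
    tauto

lemma backwardDiffPow_nonneg [DecidableEq ι] {v : ι → ℝ} (n : ℕ) {y : ℝ} {S : Finset ι}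
    (hv : ∀ i ∈ S, 0 ≤ v i) (hy : ∑ i ∈ S, v i ≤ y) : 0 ≤ backwardDiffPow v n y S := by
  induction n generalizing S with
  | zero => rw [backwardDiffPow_zero]; split_ifs <;> norm_num
  | succ n ih =>
    rw [backwardDiffPow_succ]
    refine add_nonneg (mul_nonneg (sub_nonneg.mpr hy) (ih hv hy))
      (sum_nonneg fun j hj => mul_nonneg (hv j hj) (ih (fun i hi => hv i (mem_of_mem_erase hi)) ?_))
    exact (sum_le_sum_of_subset_of_nonneg (erase_subset j S) fun i hi _ => hv i hi).trans hy

lemma sum_powerset_mul_prod_sub_one [DecidableEq ι] {R : Type*} [CommRing R] (s : Finset ι)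
    (a : Finset ι → R) (x : ι → R) :
    ∑ γ ∈ s.powerset, a γ * ∏ i ∈ γ, (x i - 1) =
      ∑ B ∈ s.powerset, (∏ i ∈ B, x i) * ∑ U ∈ (s \ B).powerset, (-1) ^ #U * a (B ∪ U) := by
  have hprod : ∀ γ : Finset ι, ∏ i ∈ γ, (x i - 1) =
      ∑ B ∈ γ.powerset, (∏ i ∈ B, x i) * (-1) ^ #(γ \ B) := by
    intro γ
    simp only [sub_eq_add_neg, prod_add, prod_const]
  have hdisj : ∀ B U : Finset ι, U ⊆ s \ B → (B ∪ U) \ B = U := fun B U hU =>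
    union_sdiff_cancel_left (disjoint_of_subset_right hU disjoint_sdiff)
  simp only [hprod, mul_sum]
  rw [sum_comm' (t' := s.powerset) (s' := fun B => Icc B s)]
  · refine sum_congr rfl fun B hB => ?_
    rw [Icc_eq_image_powerset (mem_powerset.mp hB), sum_image]
    · refine sum_congr rfl fun U hU => ?_
      rw [hdisj B U (mem_powerset.mp hU)]
      ring
    · intro U hU U' hU' h
      rw [← hdisj B U (mem_powerset.mp hU), ← hdisj B U' (mem_powerset.mp hU')]
      exact congrArg (· \ B) h
  · intro γ B
    simp only [mem_powerset, mem_Icc]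
    constructor
    · rintro ⟨hγ, hB⟩; exact ⟨⟨hB, hγ⟩, hB.trans hγ⟩
    · rintro ⟨⟨hB, hγ⟩, -⟩; exact ⟨hγ, hB⟩

lemma sum_Icc_neg_one_pow_mul_sum_powersetCard {R : Type*} [CommRing R] (s : Finset ι)
    (f : Finset ι → R) :
    ∑ k ∈ Icc 1 #s, (-1) ^ (k - 1) * ∑ γ ∈ powersetCard k s, f γ =
      f ∅ - ∑ γ ∈ s.powerset, (-1) ^ #γ * f γ := by
  have hcard : ∀ k, ∑ γ ∈ powersetCard k s, (-1) ^ #γ * f γ =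
      (-1) ^ k * ∑ γ ∈ powersetCard k s, f γ := fun k => by
    rw [mul_sum]
    exact sum_congr rfl fun γ hγ => by rw [(mem_powersetCard.mp hγ).2]
  rw [sum_powerset, sum_range_succ', powersetCard_zero, sum_singleton, card_empty, pow_zero,
    one_mul, sub_add_cancel_right, ← Ico_add_one_right_eq_Icc, sum_Ico_eq_sum_range,
    add_tsub_cancel_right, ← sum_neg_distrib]
  refine sum_congr rfl fun k _ => ?_
  rw [hcard, add_tsub_cancel_left, add_comm 1 k, pow_succ]
  ring

end Powerset

section Cube

variable {d : ℕ}

lemma cubeP_mulVec_apply (α β : Fin d → ℝ) (v : (Fin d → Bool) → ℝ) (e : Fin d → Bool) :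
    (cubeP α β *ᵥ v) e =
      v e + ∑ i, (if e i then β i else α i) * (v (Function.update e i (!e i)) - v e) := by
  have hmove : ∀ (p : Fin d → Prop) [DecidablePred p] (c : Fin d → ℝ) (u : Fin d → Fin d → Bool),
      ∑ e', ∑ i, (if p i then if e' = u i then c i * v e' else 0 else 0) =
        ∑ i, if p i then c i * v (u i) else 0 := by
    intro p _ c u
    rw [sum_comm]
    simp only [sum_ite_irrel, sum_ite_eq', mem_univ, if_true, sum_const_zero]
  have hstay : ∑ i ∈ univ.filter (fun i => e i = false), α i +
      ∑ i ∈ univ.filter (fun i => e i = true), β i = ∑ i, (if e i then β i else α i) := by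
    rw [sum_ite, add_comm]
    simp
  simp only [mulVec, dotProduct, cubeP, of_apply, add_mul, ite_mul, zero_mul, sum_mul,
    sum_add_distrib, ite_and, hmove, sum_ite_eq', mem_univ, if_true]
  rw [sub_sub, hstay, sub_mul, one_mul, sum_mul, sub_add_eq_add_sub, add_sub_assoc,
    ← sum_add_distrib, ← sum_sub_distrib]
  congr 1
  refine sum_congr rfl fun i _ => ?_
  cases e i <;> simp <;> ring

noncomputable def cubeEigvec (α β : Fin d → ℝ) (γ : Finset (Fin d)) (e : Fin d → Bool) : ℝ :=
  ∏ i ∈ γ, if e i then -β i else α i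

lemma mul_cubeEigvec_update_not_sub (α β : Fin d → ℝ) (γ : Finset (Fin d))
    (e : Fin d → Bool) (i : Fin d) :
    (if e i then β i else α i) *
        (cubeEigvec α β γ (Function.update e i (!e i)) - cubeEigvec α β γ e) =
      if i ∈ γ then -(α i + β i) * cubeEigvec α β γ e else 0 := by
  by_cases hi : i ∈ γ
  · have hsplit : ∀ b, cubeEigvec α β γ (Function.update e i b) =
        (if b then -β i else α i) * ∏ k ∈ γ.erase i, if e k then -β k else α k := by
      intro b
      rw [cubeEigvec, ← mul_prod_erase _ _ hi, Function.update_self]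
      exact congrArg _ <| prod_congr rfl fun k hk => by
        rw [Function.update_of_ne (ne_of_mem_erase hk)]
    rw [if_pos hi, hsplit, ← Function.update_eq_self i e, hsplit, Function.update_eq_self i e]
    cases e i <;> simp <;> ring
  · have hsame : cubeEigvec α β γ (Function.update e i (!e i)) = cubeEigvec α β γ e :=
      prod_congr rfl fun k hk => by rw [Function.update_of_ne (ne_of_mem_of_not_mem hk hi)]
    rw [if_neg hi, hsame, sub_self, mul_zero]

lemma cubeP_mulVec_cubeEigvec (α β : Fin d → ℝ) (γ : Finset (Fin d)) :
    cubeP α β *ᵥ cubeEigvec α β γ = (1 - ∑ i ∈ γ, (α i + β i)) • cubeEigvec α β γ := by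
  funext e
  rw [cubeP_mulVec_apply]
  simp only [mul_cubeEigvec_update_not_sub, sum_ite_mem, univ_inter, Pi.smul_apply, smul_eq_mul]
  rw [← sum_mul, sum_neg_distrib]
  ring

lemma cubeP_pow_mulVec_cubeEigvec (α β : Fin d → ℝ) (γ : Finset (Fin d)) (n : ℕ) :
    cubeP α β ^ n *ᵥ cubeEigvec α β γ = (1 - ∑ i ∈ γ, (α i + β i)) ^ n • cubeEigvec α β γ := by
  induction n with
  | zero => simp
  | succ n ih =>
    rw [pow_succ', ← mulVec_mulVec, ih, mulVec_smul, cubeP_mulVec_cubeEigvec, smul_smul, pow_succ]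

lemma prod_add_smul_single_eq_sum_smul_cubeEigvec (α β : Fin d → ℝ) (e : Fin d → Bool) :
    (∏ i, (α i + β i)) • Pi.single e 1 = ∑ γ ∈ univ.powerset,
      ((∏ i ∈ γ, if e i then -1 else 1) * ∏ i ∈ univ \ γ, if e i then α i else β i) •
        cubeEigvec α β γ := by
  funext e'
  have hfactor : ∀ i, (α i + β i) * (if e' i = e i then 1 else 0) =
      (if e i then -1 else 1) * (if e' i then -β i else α i) + (if e i then α i else β i) := by
    intro i
    cases e i <;> cases e' i <;> simp [add_comm]
  simp only [Pi.smul_apply, smul_eq_mul, Finset.sum_apply, cubeEigvec]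
  rw [Pi.single_apply]
  have hdelta : (∏ i, (α i + β i)) * (if e' = e then 1 else 0) =
      ∏ i, (α i + β i) * (if e' i = e i then 1 else 0) := by
    rw [prod_mul_distrib]
    congr 1
    by_cases h : e' = e
    · simp [h]
    · obtain ⟨i, hi⟩ := Function.ne_iff.mp h
      rw [if_neg h, prod_eq_zero (mem_univ i) (if_neg hi)]
  rw [hdelta]
  simp only [hfactor, prod_add, prod_mul_distrib]
  exact sum_congr rfl fun γ _ => by ring

lemma cubeP_pow_apply_mul_prod (α β : Fin d → ℝ) (n : ℕ) (e : Fin d → Bool) :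
    (cubeP α β ^ n) (fun _ => false) e * ∏ i, (α i + β i) = ∑ γ ∈ univ.powerset,
      (1 - ∑ i ∈ γ, (α i + β i)) ^ n * ((∏ i ∈ γ, (if e i then -1 else 1) * α i) *
        ∏ i ∈ univ \ γ, if e i then α i else β i) := by
  have h := congrFun (congrArg (cubeP α β ^ n *ᵥ ·)
    (prod_add_smul_single_eq_sum_smul_cubeEigvec α β e)) fun _ => false
  simp only [mulVec_smul, mulVec_single, mulVec_sum, cubeP_pow_mulVec_cubeEigvec] at h
  simp only [Pi.smul_apply, Finset.sum_apply, smul_eq_mul, col_apply, cubeEigvec,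
    op_smul_eq_mul, mul_one, Bool.false_eq_true, if_false] at h
  rw [mul_comm, h]
  exact sum_congr rfl fun γ _ => by rw [prod_mul_distrib]; ring

lemma cubePi_mul_prod (α β : Fin d → ℝ) (hαβ : ∀ i, α i + β i ≠ 0) (e : Fin d → Bool) :
    cubePi α β e * ∏ i, (α i + β i) = ∏ i, if e i then α i else β i := by
  rw [cubePi, ← prod_mul_distrib]
  exact prod_congr rfl fun i _ => by cases e i <;> simp [div_mul_cancel₀ _ (hαβ i)]

lemma cubeP_pow_apply_div_cubePi (α β : Fin d → ℝ) (hα : ∀ i, 0 < α i) (hβ : ∀ i, 0 < β i)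
    (n : ℕ) (e : Fin d → Bool) :
    (cubeP α β ^ n) (fun _ => false) e / cubePi α β e = ∑ γ ∈ univ.powerset,
      (1 - ∑ i ∈ γ, (α i + β i)) ^ n *
        ∏ i ∈ γ, ((if e i then 0 else (α i + β i) / β i) - 1) := by
  have hαβ : ∀ i, α i + β i ≠ 0 := fun i => (add_pos (hα i) (hβ i)).ne'
  have hprod : ∏ i, (α i + β i) ≠ 0 := prod_ne_zero_iff.mpr fun i _ => hαβ i
  have hπ : cubePi α β e ≠ 0 := by
    refine (mul_ne_zero_iff_right hprod).mp ?_
    rw [cubePi_mul_prod α β hαβ]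
    exact prod_ne_zero_iff.mpr fun i _ => by cases e i <;> simp [(hα i).ne', (hβ i).ne']
  have hfactor : ∀ i, ((if e i then 0 else (α i + β i) / β i) - 1) * (if e i then α i else β i)
      = (if e i then -1 else 1) * α i := fun i => by
    cases e i
    · simp only [Bool.false_eq_true, if_false, sub_mul, div_mul_cancel₀ _ (hβ i).ne']
      ring
    · simp
  rw [div_eq_iff hπ]
  refine mul_right_cancel₀ hprod ?_
  rw [cubeP_pow_apply_mul_prod, mul_assoc, cubePi_mul_prod α β hαβ, sum_mul]
  refine sum_congr rfl fun γ _ => ?_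
  rw [← prod_sdiff (subset_univ γ), ← prod_congr rfl fun i _ => hfactor i, prod_mul_distrib]
  ring

lemma cubeP_pow_apply_div_cubePi_top (α β : Fin d → ℝ) (hα : ∀ i, 0 < α i) (hβ : ∀ i, 0 < β i)
    (n : ℕ) :
    (cubeP α β ^ n) (fun _ => false) (fun _ => true) / cubePi α β (fun _ => true) =
      ∑ γ ∈ univ.powerset, (-1) ^ #γ * (1 - ∑ i ∈ γ, (α i + β i)) ^ n := by
  rw [cubeP_pow_apply_div_cubePi α β hα hβ]
  simp [mul_comm]

lemma le_cubeP_pow_apply_div_cubePi (α β : Fin d → ℝ) (hα : ∀ i, 0 < α i) (hβ : ∀ i, 0 < β i)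
    (hsum : (∑ i, α i) + (∑ i, β i) ≤ 1) (n : ℕ) (e : Fin d → Bool) :
    ∑ γ ∈ univ.powerset, (-1) ^ #γ * (1 - ∑ i ∈ γ, (α i + β i)) ^ n ≤
      (cubeP α β ^ n) (fun _ => false) e / cubePi α β e := by
  have hp : ∀ i, 0 ≤ α i + β i := fun i => (add_pos (hα i) (hβ i)).le
  have hdiff : ∀ B : Finset (Fin d),
      ∑ U ∈ (univ \ B).powerset, (-1) ^ #U * (1 - ∑ i ∈ B ∪ U, (α i + β i)) ^ n =
        backwardDiffPow (fun i => α i + β i) n (1 - ∑ i ∈ B, (α i + β i)) (univ \ B) := by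
    intro B
    refine sum_congr rfl fun U hU => ?_
    rw [sum_union (disjoint_of_subset_right (mem_powerset.mp hU) disjoint_sdiff),
      sub_add_eq_sub_sub]
  rw [cubeP_pow_apply_div_cubePi α β hα hβ, sum_powerset_mul_prod_sub_one]
  simp only [hdiff]
  refine le_of_eq_of_le ?_ (single_le_sum (fun B _ => mul_nonneg ?_ ?_) (empty_mem_powerset univ))
  · simp [backwardDiffPow]
  · exact prod_nonneg fun i _ => by
      split_ifs
      exacts [le_rfl, div_nonneg (hp i) (hβ i).le]
  · refine backwardDiffPow_nonneg n (fun i _ => hp i) ?_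
    rw [le_sub_iff_add_le, sum_sdiff (subset_univ B), sum_add_distrib]
    exact hsum

end Cube

/-- for the cube walk with `Σ α_i + Σ β_i ≤ 1`, the separation
distance from stationarity after `n ≥ 1` steps started at the minimal state
`(0,…,0)` equals `Σ_{k=1}^d (−1)^{k−1} Σ_{|γ|=k} (1 − s_γ)ⁿ`, where
`s_γ = Σ_{i∈γ} (α_i + β_i)`. -/
theorem stmt16 {d : ℕ} (α β : Fin d → ℝ)
    (hα : ∀ i, 0 < α i) (hβ : ∀ i, 0 < β i)
    (hsum : (∑ i, α i) + (∑ i, β i) ≤ 1) :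
    ∀ n : ℕ, 1 ≤ n →
      (univ.sup' univ_nonempty fun e : Fin d → Bool =>
          1 - (cubeP α β ^ n) (fun _ => false) e / cubePi α β e)
        = ∑ k ∈ Finset.Icc 1 d, (-1 : ℝ) ^ (k - 1) *
            ∑ γ ∈ Finset.powersetCard k (univ : Finset (Fin d)),
              (1 - ∑ i ∈ γ, (α i + β i)) ^ n := by
  intro n _
  have hsup : (univ.sup' univ_nonempty fun e : Fin d → Bool =>
      1 - (cubeP α β ^ n) (fun _ => false) e / cubePi α β e) =
        1 - ∑ γ ∈ univ.powerset, (-1) ^ #γ * (1 - ∑ i ∈ γ, (α i + β i)) ^ n := by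
    refine le_antisymm (sup'_le _ _ fun e _ => ?_) ?_
    · exact sub_le_sub_left (le_cubeP_pow_apply_div_cubePi α β hα hβ hsum n e) 1
    · rw [← cubeP_pow_apply_div_cubePi_top α β hα hβ n]
      exact le_sup' (fun e : Fin d → Bool => 1 - _ / cubePi α β e) (mem_univ _)
  have hregroup := sum_Icc_neg_one_pow_mul_sum_powersetCard (univ : Finset (Fin d))
    fun γ => (1 - ∑ i ∈ γ, (α i + β i)) ^ n
  rw [card_univ, Fintype.card_fin] at hregroup
  rw [hsup, hregroup, sum_empty, sub_zero, one_pow]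
end

section
/- For the random walk on the d-dimensional cube E = {0,1}^d with parameters α_i, β_i > 0 and Σ_{i=1}^d α_i + Σ_{i=1}^d β_i ≤ 1 (transitions P(e, e+s_i) = α_i when e_i = 0, P(e, e−s_i) = β_i when e_i = 1, P(e,e) = 1 − Σ_{i: e_i=0} α_i − Σ_{i: e_i=1} β_i, all other entries 0), the 2^d eigenvalues of P are exactly {1 − s_γ : γ ⊆ {1,…,d}}, where s_γ = Σ_{i∈γ}(α_i + β_i); equivalently, the characteristic polynomial of P equals Π_{γ ⊆ {1,…,d}} (X − (1 − s_γ)). -/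
/-!
The walk moves one coordinate at a time, so `P = 1 + ∑ᵢ Qᵢ` where `Qᵢ` is the generator
`[[-αᵢ, αᵢ], [βᵢ, -βᵢ]]` of a two-state chain acting on coordinate `i`. The constant function and
`φᵢ = (αᵢ, -βᵢ)` are eigenvectors of `Qᵢ` with eigenvalues `0` and `-(αᵢ + βᵢ)`, so the products
`e ↦ ∏_{i ∈ γ} φᵢ(eᵢ)` are eigenvectors of `P` with eigenvalues `1 - s_γ`. They form a basis: the
products of the dual vectors (the stationary law `(βᵢ, αᵢ)/(αᵢ + βᵢ)` and `(1, -1)/(αᵢ + βᵢ)`)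
give its inverse.
-/

open Finset Matrix

namespace Matrix

variable {m n R : Type*} [Fintype m] [DecidableEq m] [Fintype n] [DecidableEq n] [CommRing R]

theorem charpoly_eq_of_mul_eq_mul {P : Matrix m m R} {D : Matrix n n R} {U : Matrix m n R}
    {V : Matrix n m R} (hcard : Fintype.card m = Fintype.card n) (hVU : V * U = 1)
    (hPU : P * U = U * D) : P.charpoly = D.charpoly := by
  have hUV : U * V = 1 := (mul_eq_one_comm_of_card_eq n m R hcard.symm).mp hVU
  have hP : P = U * (D * V) := by
    rw [← Matrix.mul_assoc, ← hPU, Matrix.mul_assoc, hUV, Matrix.mul_one]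
  rw [hP, charpoly_mul_comm_of_le _ _ hcard.ge, Matrix.mul_assoc, hVU, Matrix.mul_one, hcard,
    Nat.sub_self, pow_zero, one_mul]

end Matrix

namespace CubeWalk

variable {d : ℕ} (α β : Fin d → ℝ)

def flipRate (i : Fin d) (b : Bool) : ℝ := cond b (β i) (α i)

theorem cubeP_apply (e e' : Fin d → Bool) :
    cubeP α β e e' =
      (if e' = e then 1 - ∑ i, flipRate α β i (e i) else 0) +
        ∑ i, if e' = Function.update e i (!e i) then flipRate α β i (e i) else 0 := by
  have hstay : (∑ i ∈ univ.filter (fun i => e i = false), α i)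
      + ∑ i ∈ univ.filter (fun i => e i = true), β i = ∑ i, flipRate α β i (e i) := by
    rw [sum_filter, sum_filter, ← sum_add_distrib]
    exact sum_congr rfl fun i _ => by cases e i <;> simp [flipRate]
  have hmove : ∀ i, ((if e i = false ∧ e' = Function.update e i true then α i else 0)
      + if e i = true ∧ e' = Function.update e i false then β i else 0)
      = if e' = Function.update e i (!e i) then flipRate α β i (e i) else 0 := fun i => by
    cases e i <;> simp [flipRate]
  rw [cubeP, of_apply, sub_sub, hstay]
  exact congrArg _ (sum_congr rfl fun i _ => hmove i)

theorem cubeP_mulVec_apply (f : (Fin d → Bool) → ℝ) (e : Fin d → Bool) :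
    (cubeP α β *ᵥ f) e = (1 - ∑ i, flipRate α β i (e i)) * f e +
      ∑ i, flipRate α β i (e i) * f (Function.update e i (!e i)) := by
  simp only [mulVec, dotProduct, cubeP_apply, add_mul, sum_add_distrib, sum_mul, ite_mul,
    zero_mul, sum_ite_eq']
  rw [sum_comm]
  simp [sum_ite_eq']

def eigenFactor (i : Fin d) (b : Bool) : ℝ := cond b (-β i) (α i)

theorem flipRate_mul_eigenFactor_not (i : Fin d) (b : Bool) :
    flipRate α β i b * eigenFactor α β i (!b) =
      (flipRate α β i b - (α i + β i)) * eigenFactor α β i b := by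
  cases b <;> simp only [flipRate, eigenFactor, cond_true, cond_false, Bool.not_true,
    Bool.not_false] <;> ring

def eigenvectors : Matrix (Fin d → Bool) (Finset (Fin d)) ℝ :=
  of fun e γ => ∏ i ∈ γ, eigenFactor α β i (e i)

noncomputable def dualEigenvectors : Matrix (Finset (Fin d)) (Fin d → Bool) ℝ :=
  of fun γ e => ∏ i, (if i ∈ γ then cond (e i) (-1) 1 else cond (e i) (α i) (β i)) / (α i + β i)

theorem flipRate_mul_eigenvectors_update (e : Fin d → Bool) (i : Fin d) (γ : Finset (Fin d)) :
    flipRate α β i (e i) * eigenvectors α β (Function.update e i (!e i)) γ =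
      (flipRate α β i (e i) - if i ∈ γ then α i + β i else 0) * eigenvectors α β e γ := by
  by_cases hi : i ∈ γ
  · have hsplit : ∀ b, eigenvectors α β (Function.update e i b) γ =
        eigenFactor α β i b * ∏ j ∈ γ.erase i, eigenFactor α β j (e j) := fun b => by
      rw [eigenvectors, of_apply, ← mul_prod_erase γ _ hi, Function.update_self]
      exact congrArg _ <| prod_congr rfl fun j hj => by
        rw [Function.update_of_ne (ne_of_mem_erase hj)]
    have he := hsplit (e i)
    rw [Function.update_eq_self] at he
    rw [hsplit, he, if_pos hi]
    linear_combination (∏ j ∈ γ.erase i, eigenFactor α β j (e j)) *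
      flipRate_mul_eigenFactor_not α β i (e i)
  · have hsame : eigenvectors α β (Function.update e i (!e i)) γ = eigenvectors α β e γ :=
      prod_congr rfl fun j hj => by rw [Function.update_of_ne (ne_of_mem_of_not_mem hj hi)]
    rw [hsame, if_neg hi, sub_zero]

theorem cubeP_mul_eigenvectors :
    cubeP α β * eigenvectors α β =
      eigenvectors α β * diagonal fun γ => 1 - ∑ i ∈ γ, (α i + β i) := by
  ext e γ
  change (cubeP α β *ᵥ fun e' => eigenvectors α β e' γ) e = _
  rw [cubeP_mulVec_apply, mul_diagonal]
  simp only [flipRate_mul_eigenvectors_update, ← sum_mul, sum_sub_distrib, sum_ite_mem, univ_inter]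
  ring

theorem dualEigenvectors_mul_eigenvectors (h : ∀ i, α i + β i ≠ 0) :
    dualEigenvectors α β * eigenvectors α β = 1 := by
  ext γ γ'
  set g : Fin d → Bool → ℝ := fun i b =>
    (if i ∈ γ then cond b (-1) 1 else cond b (α i) (β i)) / (α i + β i) *
      if i ∈ γ' then eigenFactor α β i b else 1
  have hg : ∀ i, ∑ b, g i b = if i ∈ γ ↔ i ∈ γ' then 1 else 0 := fun i => by
    have := h i
    by_cases hi : i ∈ γ <;> by_cases hi' : i ∈ γ' <;> simp [g, hi, hi', eigenFactor] <;>
      field_simp <;> ring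
  have hentry : ∀ e, dualEigenvectors α β γ e * eigenvectors α β e γ' = ∏ i, g i (e i) :=
    fun e => by rw [eigenvectors, of_apply, ← univ_inter γ', ← prod_ite_mem, dualEigenvectors,
      of_apply, ← prod_mul_distrib]
  rw [mul_apply, Fintype.sum_congr _ _ hentry, ← Fintype.prod_sum g, Fintype.prod_congr _ _ hg,
    Fintype.prod_boole, one_apply]
  simp only [← Finset.ext_iff]

end CubeWalk

theorem stmt17_general {d : ℕ} (α β : Fin d → ℝ)
    (hα : ∀ i, 0 < α i) (hβ : ∀ i, 0 < β i) :
    (cubeP α β).charpoly =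
      ∏ γ ∈ (univ : Finset (Fin d)).powerset,
        (Polynomial.X - Polynomial.C (1 - ∑ i ∈ γ, (α i + β i))) := by
  have hcard : Fintype.card (Fin d → Bool) = Fintype.card (Finset (Fin d)) := by simp
  rw [charpoly_eq_of_mul_eq_mul hcard
      (CubeWalk.dualEigenvectors_mul_eigenvectors α β fun i => (add_pos (hα i) (hβ i)).ne')
      (CubeWalk.cubeP_mul_eigenvectors α β), charpoly_diagonal, powerset_univ]

/-- the characteristic polynomial of the cube walk equals
`Π_{γ ⊆ {1,…,d}} (X − (1 − s_γ))` with `s_γ = Σ_{i∈γ}(α_i + β_i)`; i.e. the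
`2^d` eigenvalues of `P` are exactly the numbers `1 − s_γ`. -/
theorem stmt17 {d : ℕ} (α β : Fin d → ℝ)
    (hα : ∀ i, 0 < α i) (hβ : ∀ i, 0 < β i)
    (hsum : (∑ i, α i) + (∑ i, β i) ≤ 1) :
    (cubeP α β).charpoly =
      ∏ γ ∈ (univ : Finset (Fin d)).powerset,
        (Polynomial.X - Polynomial.C (1 - ∑ i ∈ γ, (α i + β i))) :=
  stmt17_general α β hα hβ
end
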